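/- arXiv:1011.1848 — 2 statements merged into one kernel-verified Lean document; each statement's English description precedes it below -/
import Mathlib

section
/- Define the big q-Hermite polynomials by H_n(x|a,q) = ∑_{i=0}^{n} [n choose i]_q q^{binom(i,2)} (-a)^i H_{n-i}(x|q), where H_m(x|q) are the continuous q-Hermite polynomials. Then the inverse relation holds: H_n(x|q) = ∑_{i=0}^{n} [n choose i]_q a^i H_{n-i}(x|a,q) for all n ≥ 0. -/
noncomputable def qint (q : ℝ) (n : ℕ) : ℝ := ∑ i ∈ Finset.range n, q ^ i

noncomputable def qfact (q : ℝ) (n : ℕ) : ℝ := ∏ i ∈ Finset.range n, qint q (i + 1)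

noncomputable def qPoch (a q : ℝ) (n : ℕ) : ℝ := ∏ i ∈ Finset.range n, (1 - a * q ^ i)

/-- Gaussian binomial coefficient as a polynomial in `q`, via the Pascal-type recurrence. -/
noncomputable def qbinom (q : ℝ) : ℕ → ℕ → ℝ
  | _, 0 => 1
  | 0, _ + 1 => 0
  | n + 1, k + 1 => qbinom q n k + q ^ (k + 1) * qbinom q n (k + 1)

/-- Rescaled continuous q-Hermite polynomials `H_n(x|q)`. -/
noncomputable def qHermite (q x : ℝ) : ℕ → ℝ
  | 0 => 1
  | 1 => x
  | n + 2 => x * qHermite q x (n + 1) - qint q (n + 1) * qHermite q x n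

/-- Chebyshev polynomials of the second kind. -/
noncomputable def Ucheb (x : ℝ) : ℕ → ℝ
  | 0 => 1
  | 1 => 2 * x
  | n + 2 => 2 * x * Ucheb x (n + 1) - Ucheb x n

/-- Probabilist's Hermite polynomials. -/
noncomputable def He (x : ℝ) : ℕ → ℝ
  | 0 => 1
  | 1 => x
  | n + 2 => x * He x (n + 1) - (n + 1 : ℝ) * He x n

/-- Big q-Hermite polynomials `H_n(x|a,q)`. -/
noncomputable def bigH (q a x : ℝ) (n : ℕ) : ℝ :=
  ∑ i ∈ Finset.range (n + 1),
    qbinom q n i * q ^ (i.choose 2) * (-a) ^ i * qHermite q x (n - i)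

/-- Al-Salam--Chihara polynomials `P_n(x|y,ρ,q)`. -/
noncomputable def ASC (q x y ρ : ℝ) : ℕ → ℝ
  | 0 => 1
  | 1 => x - ρ * y
  | n + 2 =>
      (x - ρ * y * q ^ (n + 1)) * ASC q x y ρ (n + 1)
        - qint q (n + 1) * (1 - ρ ^ 2 * q ^ n) * ASC q x y ρ n

/-- Auxiliary polynomials `B_n(x|q)`. -/
noncomputable def Bpoly (q x : ℝ) : ℕ → ℝ
  | 0 => 1
  | 1 => -x
  | n + 2 => -q ^ (n + 1) * x * Bpoly q x (n + 1) + q ^ n * qint q (n + 1) * Bpoly q x n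

/-!
`bigH q a x` is the `q`-binomial convolution `∑ᵢ [n i]_q w(i) f(n - i)` of `H(x|q)` with the
weights `w(i) = q^(i choose 2) (-a)^i`. These convolutions compose associatively, because
`[n m]_q [m i]_q = [n i]_q [n-i, m-i]_q`, and by Rothe's `q`-binomial theorem the convolution of
`a^i` with `q^(i choose 2) (-b)^i` is `∏_{k<n} (a - b q^k)`. For `b = a` the factor `k = 0`
vanishes, so convolving with `a^i` inverts the transform defining `bigH`.
-/

open Finset

theorem Nat.succ_choose_two (r : ℕ) : (r + 1).choose 2 = r.choose 2 + r := by
  rw [Nat.choose_succ_succ, Nat.choose_one_right, add_comm]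

theorem qbinom_zero_right (q : ℝ) (n : ℕ) : qbinom q n 0 = 1 := by cases n <;> rfl

theorem qbinom_succ_succ (q : ℝ) (n k : ℕ) :
    qbinom q (n + 1) (k + 1) = qbinom q n k + q ^ (k + 1) * qbinom q n (k + 1) := rfl

theorem qbinom_eq_zero_of_lt (q : ℝ) {n k : ℕ} (h : n < k) : qbinom q n k = 0 := by
  induction n generalizing k with
  | zero => obtain ⟨k, rfl⟩ := Nat.exists_eq_add_of_lt h; rfl
  | succ n ih =>
    obtain ⟨k, rfl⟩ := Nat.exists_eq_add_of_le' (Nat.one_le_of_lt h)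
    rw [qbinom_succ_succ, ih (by omega), ih (by omega), mul_zero, add_zero]

@[simp]
theorem qbinom_self (q : ℝ) (n : ℕ) : qbinom q n n = 1 := by
  induction n with
  | zero => rfl
  | succ n ih =>
    rw [qbinom_succ_succ, ih, qbinom_eq_zero_of_lt q n.lt_succ_self, mul_zero, add_zero]

theorem qbinom_mul_qbinom (q : ℝ) {n m i : ℕ} (him : i ≤ m) :
    qbinom q n m * qbinom q m i = qbinom q n i * qbinom q (n - i) (m - i) := by
  induction n generalizing m i with
  | zero =>
    rcases Nat.eq_zero_or_pos i with rfl | hi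
    · simp [qbinom_zero_right]
    · rw [qbinom_eq_zero_of_lt q (by omega : 0 < m), qbinom_eq_zero_of_lt q hi, zero_mul, zero_mul]
  | succ n ih =>
    rcases Nat.eq_zero_or_pos i with rfl | hi
    · simp [qbinom_zero_right]
    rcases him.eq_or_lt with rfl | him
    · simp [qbinom_zero_right]
    rcases lt_or_ge (n + 1) m with hnm | hmn
    · rw [qbinom_eq_zero_of_lt q hnm, zero_mul]
      rcases lt_or_ge (n + 1) i with hni | hin
      · rw [qbinom_eq_zero_of_lt q hni, zero_mul]
      · rw [qbinom_eq_zero_of_lt q (by omega : n + 1 - i < m - i), mul_zero]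
    -- Writing `i`, `m`, `n` as `i + 1`, `i + d + 2`, `i + d + 1 + e` removes truncated subtraction.
    obtain ⟨i, rfl⟩ : ∃ i', i = i' + 1 := ⟨i - 1, by omega⟩
    obtain ⟨d, rfl⟩ : ∃ d, m = i + d + 1 + 1 := ⟨m - i - 2, by omega⟩
    obtain ⟨e, rfl⟩ : ∃ e, n = i + d + 1 + e := ⟨n - i - d - 1, by omega⟩
    have h1 : qbinom q (i + d + 1 + e) (i + d + 1) * qbinom q (i + d + 1) i
        = qbinom q (i + d + 1 + e) i * qbinom q (d + e + 1) (d + 1) := by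
      rw [ih (by omega)]; congr 2 <;> omega
    have h2 : qbinom q (i + d + 1 + e) (i + d + 1) * qbinom q (i + d + 1) (i + 1)
        = qbinom q (i + d + 1 + e) (i + 1) * qbinom q (d + e) d := by
      rw [ih (by omega)]; congr 2 <;> omega
    have h3 : qbinom q (i + d + 1 + e) (i + d + 1 + 1) * qbinom q (i + d + 1 + 1) (i + 1)
        = qbinom q (i + d + 1 + e) (i + 1) * qbinom q (d + e) (d + 1) := by
      rw [ih (by omega)]; congr 2 <;> omega
    rw [show i + d + 1 + e + 1 - (i + 1) = d + e + 1 by omega,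
      show i + d + 1 + 1 - (i + 1) = d + 1 by omega]
    rw [qbinom_succ_succ q (d + e) d] at h1
    rw [qbinom_succ_succ q (i + d + 1 + e) (i + d + 1), qbinom_succ_succ q (i + d + 1 + e) i,
      qbinom_succ_succ q (d + e) d]
    linear_combination h1 + q ^ (i + 1) * h2 + q ^ (i + d + 2) * h3
      + qbinom q (i + d + 1 + e) (i + d + 1) * qbinom_succ_succ q (i + d + 1) i

noncomputable def qbinomConv (q : ℝ) (w f : ℕ → ℝ) (n : ℕ) : ℝ :=
  ∑ i ∈ range (n + 1), qbinom q n i * w i * f (n - i)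

theorem qbinomConv_assoc (q : ℝ) (w v f : ℕ → ℝ) :
    qbinomConv q w (qbinomConv q v f) = qbinomConv q (qbinomConv q w v) f := by
  funext n
  have hrange : ∀ i ∈ range (n + 1), qbinom q n i * w i * qbinomConv q v f (n - i) =
      ∑ j ∈ range (n + 1 - i),
        qbinom q n i * w i * (qbinom q (n - i) j * v j * f (n - i - j)) := by
    intro i hi
    rw [qbinomConv, mul_sum, show n - i + 1 = n + 1 - i by grind]
  rw [qbinomConv, sum_congr rfl hrange, ← sum_range_diag_flip, qbinomConv]
  refine sum_congr rfl fun m _ => ?_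
  rw [qbinomConv, mul_sum, sum_mul]
  refine sum_congr rfl fun i hi => ?_
  have him : i ≤ m := Nat.lt_succ_iff.mp (mem_range.mp hi)
  rw [show n - i - (m - i) = n - m by omega]
  linear_combination -(w i * v (m - i) * f (n - m)) * qbinom_mul_qbinom q (n := n) him

theorem qbinomConv_single_zero (q : ℝ) (f : ℕ → ℝ) :
    qbinomConv q (Pi.single 0 1) f = f := by
  funext n
  rw [qbinomConv, sum_eq_single 0]
  · simp [qbinom_zero_right]
  · intro i _ hi
    rw [Pi.single_eq_of_ne hi, mul_zero, zero_mul]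
  · simp

theorem qbinomConv_pow_choose_two_eq_prod (q a b : ℝ) (n : ℕ) :
    qbinomConv q (a ^ ·) (fun i => q ^ i.choose 2 * (-b) ^ i) n =
      ∏ k ∈ range n, (a - b * q ^ k) := by
  set T : ℕ → ℕ → ℝ := fun n k =>
    qbinom q n k * a ^ k * (q ^ (n - k).choose 2 * (-b) ^ (n - k))
  change ∑ k ∈ range (n + 1), T n k = _
  induction n with
  | zero => simp [T]
  | succ n ih =>
    have first : T (n + 1) 0 = -b * q ^ n * T n 0 := by
      simp only [T, qbinom_zero_right, Nat.sub_zero, Nat.succ_choose_two]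
      ring
    have last : T (n + 1) (n + 1) = a * T n n := by
      simp [T, pow_succ, mul_comm]
    have pascal : ∀ k < n, T (n + 1) (k + 1) = a * T n k - b * q ^ n * T n (k + 1) := by
      intro k hk
      obtain ⟨r, rfl⟩ := Nat.exists_eq_add_of_lt hk
      simp only [T, qbinom_succ_succ, Nat.add_sub_add_right, show k + r + 1 - k = r + 1 by omega,
        show k + r + 1 - (k + 1) = r by omega, Nat.succ_choose_two]
      ring
    rw [prod_range_succ, ← ih, sum_range_succ, sum_range_succ',
      sum_congr rfl fun k hk => pascal k (mem_range.mp hk), sum_sub_distrib, ← mul_sum,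
      ← mul_sum, last, first]
    linear_combination (-a) * sum_range_succ (T n) n + (b * q ^ n) * sum_range_succ' (T n) n

theorem qbinomConv_pow_choose_two_self (q a : ℝ) :
    qbinomConv q (a ^ ·) (fun i => q ^ i.choose 2 * (-a) ^ i) = Pi.single 0 1 := by
  funext n
  rw [qbinomConv_pow_choose_two_eq_prod]
  cases n with
  | zero => simp
  | succ n => simp [prod_range_succ']

theorem qbinomConv_pow_qbinomConv_choose_two (q a : ℝ) (f : ℕ → ℝ) :
    qbinomConv q (a ^ ·) (qbinomConv q (fun i => q ^ i.choose 2 * (-a) ^ i) f) = f := by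
  rw [qbinomConv_assoc, qbinomConv_pow_choose_two_self, qbinomConv_single_zero]

theorem qHermite_eq_sum_bigH (q a x : ℝ) (n : ℕ) :
    qHermite q x n =
      ∑ i ∈ Finset.range (n + 1), qbinom q n i * a ^ i * bigH q a x (n - i) := by
  have hbigH : bigH q a x = qbinomConv q (fun i => q ^ i.choose 2 * (-a) ^ i) (qHermite q x) := by
    funext m
    simp only [bigH, qbinomConv, mul_assoc]
  rw [hbigH]
  exact (congrFun (qbinomConv_pow_qbinomConv_choose_two q a (qHermite q x)) n).symm
end

section
/- The Al-Salam–Chihara polynomials at q = 0 satisfy P_n(x|y,ρ,0) = U_n(x/2) - ρy U_{n-1}(x/2) + ρ² U_{n-2}(x/2) for all n ≥ 1, where U_n are the Chebyshev polynomials of the second kind with U_{-1} = 0. -/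
/-! At `q = 0` the recurrence of `P_n` becomes `P_{n+1} = x P_n - P_{n-1}` for `n ≥ 2`, which is
the recurrence of `U_n (x / 2)`. So for `n ≥ 2` both sides solve the same linear recurrence of order
two and it suffices to compare them at `n = 2, 3`; the case `n = 1` is read off directly. -/

noncomputable def chebyshevRecurrence (x : ℝ) : LinearRecurrence ℝ := ⟨2, ![-1, x]⟩

lemma chebyshevRecurrence_isSolution_iff (x : ℝ) (u : ℕ → ℝ) :
    (chebyshevRecurrence x).IsSolution u ↔ ∀ n, u (n + 2) = x * u (n + 1) - u n := by
  refine forall_congr' fun n => ?_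
  change u (n + 2) = ∑ i : Fin 2, ![-1, x] i * u (n + i) ↔ _
  rw [Fin.sum_univ_two]
  simp only [Matrix.cons_val_zero, Matrix.cons_val_one, Fin.val_zero, Fin.val_one, add_zero]
  ring_nf

lemma qint_zero_succ (n : ℕ) : qint 0 (n + 1) = 1 := by
  simp [qint, Finset.sum_range_succ']

lemma ASC_zero_add_three (x y ρ : ℝ) (n : ℕ) :
    ASC 0 x y ρ (n + 3) = x * ASC 0 x y ρ (n + 2) - ASC 0 x y ρ (n + 1) := by
  simp [ASC, qint_zero_succ]

lemma Ucheb_half_add_two (x : ℝ) (n : ℕ) :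
    Ucheb (x / 2) (n + 2) = x * Ucheb (x / 2) (n + 1) - Ucheb (x / 2) n := by
  simp only [Ucheb]
  ring

lemma ASC_zero_add_two (x y ρ : ℝ) (n : ℕ) :
    ASC 0 x y ρ (n + 2) =
      Ucheb (x / 2) (n + 2) - ρ * y * Ucheb (x / 2) (n + 1) + ρ ^ 2 * Ucheb (x / 2) n := by
  set E := chebyshevRecurrence x
  have hASC : E.IsSolution fun n => ASC 0 x y ρ (n + 2) :=
    (chebyshevRecurrence_isSolution_iff x _).2 fun n => ASC_zero_add_three x y ρ (n + 1)
  have hU : E.IsSolution fun n =>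
      Ucheb (x / 2) (n + 2) - ρ * y * Ucheb (x / 2) (n + 1) + ρ ^ 2 * Ucheb (x / 2) n := by
    refine (chebyshevRecurrence_isSolution_iff x _).2 fun n => ?_
    simp only [Ucheb_half_add_two x (n + 2), Ucheb_half_add_two x (n + 1), Ucheb_half_add_two x n]
    ring
  refine congrFun ((E.eq_iff_eqOn_range_order _ _ hASC hU).2 fun k hk => ?_) n
  simp only [E, chebyshevRecurrence, Finset.coe_range, Set.mem_Iio] at hk
  interval_cases k <;>
    simp only [ASC, Ucheb, qint_zero_succ, pow_zero, pow_one, mul_zero, sub_zero] <;> ring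

theorem ASC_q_zero (x y ρ : ℝ) (n : ℕ) (hn : 1 ≤ n) :
    ASC 0 x y ρ n =
      Ucheb (x / 2) n - ρ * y * Ucheb (x / 2) (n - 1)
        + ρ ^ 2 * (if n = 1 then 0 else Ucheb (x / 2) (n - 2)) := by
  obtain rfl | ⟨m, rfl⟩ : n = 1 ∨ ∃ m, n = m + 2 := by
    rcases Nat.exists_eq_add_of_le' hn with ⟨m, rfl⟩
    cases m <;> simp
  · simp only [ASC, Ucheb, Nat.sub_self, if_true]
    ring
  · simpa using ASC_zero_add_two x y ρ m
end
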